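/- arXiv:2207.00704 — 4 statements merged into one kernel-verified Lean document; each statement's English description precedes it below -/
import Mathlib

section
/- Let d ≥ 1, let V ⊆ ℝ^d be a linear subspace such that V + ℤ^d is dense in ℝ^d, and let ∼ be an equivalence relation on ℝ^d whose graph {(x,y) : x ∼ y} is closed in ℝ^d × ℝ^d, which is ℤ^d-equivariant (x ∼ y implies x + k ∼ y + k for every k ∈ ℤ^d), and which is saturated by V (x ∼ x + v for every x ∈ ℝ^d and every v ∈ V). Then the equivalence class S = {y ∈ ℝ^d : y ∼ 0} of the origin is an additive subgroup of ℝ^d: if x, y ∈ S then x + y ∈ S and −x ∈ S. -/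
/-- The equivalence class of the origin for a closed, `ℤ^d`-equivariant,
`V`-saturated equivalence relation on `ℝ^d` (with `V + ℤ^d` dense) is closed
under addition and negation. -/
theorem stmt_0 (d : ℕ) (hd : 1 ≤ d) (V : Submodule ℝ (Fin d → ℝ))
    (hV : Dense {x : Fin d → ℝ | ∃ v ∈ V, ∃ k : Fin d → ℤ, x = v + (fun i => (k i : ℝ))})
    (r : (Fin d → ℝ) → (Fin d → ℝ) → Prop) (hr : Equivalence r)
    (hclosed : IsClosed {p : (Fin d → ℝ) × (Fin d → ℝ) | r p.1 p.2})
    (hequiv : ∀ x y : Fin d → ℝ, r x y → ∀ k : Fin d → ℤ,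
      r (x + (fun i => (k i : ℝ))) (y + (fun i => (k i : ℝ))))
    (hsat : ∀ x : Fin d → ℝ, ∀ v ∈ V, r x (x + v)) :
    (∀ x y : Fin d → ℝ, r x 0 → r y 0 → r (x + y) 0) ∧
      (∀ x : Fin d → ℝ, r x 0 → r (-x) 0) := by
  -- translation invariance by any t
  have htrans : ∀ t x y : Fin d → ℝ, r x y → r (x + t) (y + t) := by
    intro t x y hxy
    have hC : IsClosed {s : Fin d → ℝ | r (x + s) (y + s)} := by
      have : Continuous fun s : Fin d → ℝ => ((x + s, y + s) : (Fin d → ℝ) × (Fin d → ℝ)) :=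
        (continuous_const.add continuous_id).prodMk (continuous_const.add continuous_id)
      exact hclosed.preimage this
    have hsub : {x : Fin d → ℝ | ∃ v ∈ V, ∃ k : Fin d → ℤ, x = v + (fun i => (k i : ℝ))}
        ⊆ {s : Fin d → ℝ | r (x + s) (y + s)} := by
      rintro s ⟨v, hv, k, rfl⟩
      have h1 : r (x + v) (y + v) :=
        hr.trans (hr.trans (hr.symm (hsat x v hv)) hxy) (hsat y v hv)
      have h2 := hequiv _ _ h1 k
      simpa [add_assoc] using h2
    have : {s : Fin d → ℝ | r (x + s) (y + s)} = Set.univ := by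
      apply Set.eq_univ_of_univ_subset
      calc Set.univ ⊆ closure {x : Fin d → ℝ | ∃ v ∈ V, ∃ k : Fin d → ℤ,
            x = v + (fun i => (k i : ℝ))} := by rw [hV.closure_eq]
        _ ⊆ {s : Fin d → ℝ | r (x + s) (y + s)} := hC.closure_subset_iff.mpr hsub
    exact this.ge (Set.mem_univ t)
  constructor
  · intro x y hx hy
    have h1 : r (x + y) (0 + y) := htrans y x 0 hx
    rw [zero_add] at h1
    exact hr.trans h1 hy
  · intro x hx
    have h1 : r (x + (-x)) (0 + (-x)) := htrans (-x) x 0 hx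
    rw [zero_add, add_neg_cancel] at h1
    exact hr.symm h1
end

section
/- Let d ≥ 1, let V ⊆ ℝ^d be a linear subspace such that V + ℤ^d is dense in ℝ^d, and let ∼ be an equivalence relation on ℝ^d whose graph {(x,y) : x ∼ y} is closed in ℝ^d × ℝ^d, which is ℤ^d-equivariant (x ∼ y implies x + k ∼ y + k for every k ∈ ℤ^d), and which is saturated by V (x ∼ x + v for every x ∈ ℝ^d and every v ∈ V). If in addition the equivalence class S = {y : y ∼ 0} of the origin is connected, then S is a (closed) ℝ-linear subspace of ℝ^d, every equivalence class equals x + S, and S + ℤ^d is dense in ℝ^d. -/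
/-!
Translating by the dense set `V + ℤ^d` and passing to the limit through the closed graph, the
relation is invariant under all translations, so the class `G` of `0` is a closed connected
subgroup of `ℝ^d`. Such a subgroup is a linear subspace: if `L` is the largest subspace inside
`G` and `C` a complement, then `G ∩ C` is the projection of `G` along `L`, hence connected, and it
contains no line. A closed subgroup whose nonzero elements accumulate at `0` contains the line
through a limit of their directions, so `G ∩ C` is discrete, hence `{0}`.
-/

open Filter Topology

namespace AddSubgroup

variable {E : Type*} [NormedAddCommGroup E] [NormedSpace ℝ E]

def lineality (G : AddSubgroup E) : Submodule ℝ E where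
  carrier := {x | ∀ t : ℝ, t • x ∈ G}
  add_mem' hx hy t := by simpa only [smul_add] using G.add_mem (hx t) (hy t)
  zero_mem' t := by simpa only [smul_zero] using G.zero_mem
  smul_mem' c x hx t := by simpa only [smul_smul] using hx (t * c)

variable {G H : AddSubgroup E}

theorem mem_lineality {x : E} : x ∈ G.lineality ↔ ∀ t : ℝ, t • x ∈ G := Iff.rfl

theorem lineality_subset (G : AddSubgroup E) : (G.lineality : Set E) ⊆ G :=
  fun x hx => by simpa only [one_smul, SetLike.mem_coe] using hx 1

theorem lineality_mono (h : G ≤ H) : G.lineality ≤ H.lineality :=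
  fun _ hx t => h (hx t)

theorem mem_lineality_of_tendsto {ι : Type*} {l : Filter ι} [l.NeBot]
    (hG : IsClosed (G : Set E)) {g : ι → E} (hg : ∀ i, g i ∈ G)
    (h0 : Tendsto (fun i => ‖g i‖) l (𝓝 0)) {x : E}
    (hx : Tendsto (fun i => ‖g i‖⁻¹ • g i) l (𝓝 x)) : x ∈ G.lineality := by
  refine mem_lineality.2 fun t => ?_
  -- `⌊t / ‖g i‖⌋ • g i ∈ G` differs from `t • (‖g i‖⁻¹ • g i)` by less than `‖g i‖`.
  have hfloor : ∀ i, ⌊t / ‖g i‖⌋ • g i =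
      t • (‖g i‖⁻¹ • g i) - Int.fract (t / ‖g i‖) • g i := fun i => by
    rw [smul_smul, ← div_eq_mul_inv, ← sub_smul, Int.self_sub_fract, Int.cast_smul_eq_zsmul]
  have herr : Tendsto (fun i => Int.fract (t / ‖g i‖) • g i) l (𝓝 0) := by
    refine squeeze_zero_norm (fun i => ?_) h0
    rw [norm_smul, Real.norm_of_nonneg (Int.fract_nonneg _)]
    exact mul_le_of_le_one_left (norm_nonneg _) (Int.fract_lt_one _).le
  have hlim : Tendsto (fun i => ⌊t / ‖g i‖⌋ • g i) l (𝓝 (t • x)) := by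
    simpa only [hfloor, sub_zero] using (hx.const_smul t).sub herr
  exact hG.mem_of_tendsto hlim (Eventually.of_forall fun i => G.zsmul_mem (hg i) _)

theorem discreteTopology_of_lineality_eq_bot [FiniteDimensional ℝ E]
    (hG : IsClosed (G : Set E)) (h : G.lineality = ⊥) : DiscreteTopology G := by
  rw [discreteTopology_iff_isOpen_singleton_zero, Metric.isOpen_singleton_iff]
  by_contra! hsmall
  choose g hg_lt hg_ne using fun n : ℕ => hsmall (1 / (n + 1)) Nat.one_div_pos_of_nat
  have hg0 : ∀ n, ‖(g n : E)‖ ≠ 0 := fun n => by simpa using hg_ne n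
  have h0 : Tendsto (fun n => ‖(g n : E)‖) atTop (𝓝 0) :=
    squeeze_zero (fun _ => norm_nonneg _) (fun n => by simpa using (hg_lt n).le)
      tendsto_one_div_add_atTop_nhds_zero_nat
  have hsphere : ∀ n, ‖(g n : E)‖⁻¹ • (g n : E) ∈ Metric.sphere (0 : E) 1 := fun n => by
    rw [mem_sphere_zero_iff_norm, norm_smul, norm_inv, norm_norm, inv_mul_cancel₀ (hg0 n)]
  obtain ⟨x, hx, φ, hφ, hlim⟩ := (isCompact_sphere (0 : E) 1).tendsto_subseq hsphere
  have hxG : x ∈ G.lineality :=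
    mem_lineality_of_tendsto hG (fun n => (g (φ n)).2) (h0.comp hφ.tendsto_atTop) hlim
  rw [h, Submodule.mem_bot] at hxG
  simp [hxG] at hx

theorem coe_lineality_of_isClosed_of_isPreconnected [FiniteDimensional ℝ E]
    (hG : IsClosed (G : Set E)) (hconn : IsPreconnected (G : Set E)) :
    (G.lineality : Set E) = G := by
  refine (lineality_subset G).antisymm fun g hg => ?_
  set L := G.lineality
  obtain ⟨C, hLC⟩ := L.exists_isCompl
  -- `D = G ∩ C` is connected (the image of `G` under the projection along `L ⊆ G`) and contains
  -- no line, hence is discrete, hence trivial.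
  set π := C.projection L hLC.symm
  set D := G ⊓ C.toAddSubgroup
  have hπ : ∀ x, π x = x - L.projection C hLC x := Submodule.projection_eq_self_sub_projection hLC
  have hπD : π '' G = D := by
    refine Set.Subset.antisymm ?_ fun c hc => ⟨c, hc.1, ?_⟩
    · rintro _ ⟨x, hx, rfl⟩
      have hxL : L.projection C hLC x ∈ G :=
        lineality_subset G (Submodule.projection_apply_mem _ x)
      exact ⟨hπ x ▸ G.sub_mem hx hxL, Submodule.projection_apply_mem _ x⟩
    · exact Submodule.projection_apply_of_mem_left _ hc.2
  have hDlin : D.lineality = ⊥ := (Submodule.eq_bot_iff _).2 fun x hx =>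
    Submodule.disjoint_def.1 hLC.disjoint x (lineality_mono inf_le_left hx) (lineality_subset D hx).2
  have := discreteTopology_of_lineality_eq_bot (hG.inter C.closed_of_finiteDimensional) hDlin
  have := isPreconnected_iff_preconnectedSpace.1
    (hπD ▸ hconn.image π π.continuous_of_finiteDimensional.continuousOn)
  have := PreconnectedSpace.trivial_of_discrete (X := D)
  have hπg : π g = 0 := congrArg Subtype.val
    (Subsingleton.elim (⟨π g, hπD.subset ⟨g, hg, rfl⟩⟩ : D) 0)
  exact (Submodule.projection_apply_eq_zero_iff _).1 hπg

end AddSubgroup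

section TranslationInvariant

variable {E : Type*} [AddCommGroup E] {r : E → E → Prop}

theorem rel_add_of_dense [TopologicalSpace E] [ContinuousAdd E]
    (hclosed : IsClosed {p : E × E | r p.1 p.2}) {T : Set E} (hT : Dense T)
    (hinv : ∀ x y, r x y → ∀ t ∈ T, r (x + t) (y + t)) {x y : E} (h : r x y) (t : E) :
    r (x + t) (y + t) :=
  closure_minimal (hinv x y h)
    (hclosed.preimage (by fun_prop : Continuous fun t : E => (x + t, y + t))) (hT t)

def Equivalence.zeroClass (hr : Equivalence r)
    (hinv : ∀ x y, r x y → ∀ t, r (x + t) (y + t)) : AddSubgroup E where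
  carrier := {y | r y 0}
  zero_mem' := hr.refl 0
  add_mem' {a b} ha hb := hr.trans (by simpa only [zero_add, add_comm b] using hinv b 0 hb a) ha
  neg_mem' {a} ha := hr.symm (by simpa only [add_neg_cancel, zero_add] using hinv a 0 ha (-a))

theorem rel_iff_sub_rel_zero (hr : Equivalence r)
    (hinv : ∀ x y, r x y → ∀ t, r (x + t) (y + t)) {x y : E} : r x y ↔ r (y - x) 0 := by
  refine ⟨fun h => hr.symm ?_, fun h => hr.symm ?_⟩
  · simpa only [add_neg_cancel, ← sub_eq_add_neg] using hinv x y h (-x)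
  · simpa only [sub_add_cancel, zero_add] using hinv (y - x) 0 h x

end TranslationInvariant

theorem stmt_1_general (d : ℕ) (V : Submodule ℝ (Fin d → ℝ))
    (hV : Dense {x : Fin d → ℝ | ∃ v ∈ V, ∃ k : Fin d → ℤ, x = v + (fun i => (k i : ℝ))})
    (r : (Fin d → ℝ) → (Fin d → ℝ) → Prop) (hr : Equivalence r)
    (hclosed : IsClosed {p : (Fin d → ℝ) × (Fin d → ℝ) | r p.1 p.2})
    (hequiv : ∀ x y : Fin d → ℝ, r x y → ∀ k : Fin d → ℤ,
      r (x + (fun i => (k i : ℝ))) (y + (fun i => (k i : ℝ))))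
    (hsat : ∀ x : Fin d → ℝ, ∀ v ∈ V, r x (x + v))
    (hconn : IsConnected {y : Fin d → ℝ | r y 0}) :
    ∃ S : Submodule ℝ (Fin d → ℝ),
      IsClosed (S : Set (Fin d → ℝ)) ∧
      (∀ y : Fin d → ℝ, r y 0 ↔ y ∈ S) ∧
      (∀ x y : Fin d → ℝ, r x y ↔ y - x ∈ S) ∧
      Dense {x : Fin d → ℝ | ∃ s ∈ S, ∃ k : Fin d → ℤ, x = s + (fun i => (k i : ℝ))} := by
  have hinvT : ∀ x y, r x y → ∀ t ∈ {x : Fin d → ℝ | ∃ v ∈ V, ∃ k : Fin d → ℤ,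
      x = v + (fun i => (k i : ℝ))}, r (x + t) (y + t) := by
    rintro x y hxy _ ⟨v, hv, k, rfl⟩
    simp only [← add_assoc, add_right_comm _ v]
    exact hr.trans (hr.trans (hr.symm (hsat _ v hv)) (hequiv x y hxy k)) (hsat _ v hv)
  have hinv := fun x y (h : r x y) => rel_add_of_dense hclosed hV hinvT h
  have hclass : IsClosed {y | r y 0} :=
    hclosed.preimage (by fun_prop : Continuous fun y : Fin d → ℝ => (y, (0 : Fin d → ℝ)))
  have hS : ((hr.zeroClass hinv).lineality : Set (Fin d → ℝ)) = {y | r y 0} :=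
    AddSubgroup.coe_lineality_of_isClosed_of_isPreconnected hclass hconn.isPreconnected
  have hmem : ∀ y, r y 0 ↔ y ∈ (hr.zeroClass hinv).lineality := fun y => (Set.ext_iff.1 hS y).symm
  refine ⟨_, hS ▸ hclass, hmem, fun x y => (rel_iff_sub_rel_zero hr hinv).trans (hmem _), ?_⟩
  refine hV.mono ?_
  rintro _ ⟨v, hv, k, rfl⟩
  exact ⟨v, (hmem v).1 (hr.symm (by simpa only [zero_add] using hsat 0 v hv)), k, rfl⟩

/-- A closed, `ℤ^d`-equivariant, `V`-saturated equivalence relation on `ℝ^d`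
(with `V + ℤ^d` dense) whose class of the origin is connected has all of its
classes equal to translates of a single closed linear subspace `S`, and
`S + ℤ^d` is dense in `ℝ^d`. -/
theorem stmt_1 (d : ℕ) (hd : 1 ≤ d) (V : Submodule ℝ (Fin d → ℝ))
    (hV : Dense {x : Fin d → ℝ | ∃ v ∈ V, ∃ k : Fin d → ℤ, x = v + (fun i => (k i : ℝ))})
    (r : (Fin d → ℝ) → (Fin d → ℝ) → Prop) (hr : Equivalence r)
    (hclosed : IsClosed {p : (Fin d → ℝ) × (Fin d → ℝ) | r p.1 p.2})
    (hequiv : ∀ x y : Fin d → ℝ, r x y → ∀ k : Fin d → ℤ,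
      r (x + (fun i => (k i : ℝ))) (y + (fun i => (k i : ℝ))))
    (hsat : ∀ x : Fin d → ℝ, ∀ v ∈ V, r x (x + v))
    (hconn : IsConnected {y : Fin d → ℝ | r y 0}) :
    ∃ S : Submodule ℝ (Fin d → ℝ),
      IsClosed (S : Set (Fin d → ℝ)) ∧
      (∀ y : Fin d → ℝ, r y 0 ↔ y ∈ S) ∧
      (∀ x y : Fin d → ℝ, r x y ↔ y - x ∈ S) ∧
      Dense {x : Fin d → ℝ | ∃ s ∈ S, ∃ k : Fin d → ℤ, x = s + (fun i => (k i : ℝ))} :=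
  stmt_1_general d V hV r hr hclosed hequiv hsat hconn
end

section
/- For every dimension d ≥ 1 and all ε > 0, R > 0 there exist constants a, b > 0 with the following property: whenever L ≥ 0 and γ : [0, L] → ℝ^d is a 1-Lipschitz map such that ‖γ(s) − γ(t)‖ ≥ ε for all s, t ∈ [0, L] with |s − t| ≥ 1, and such that every point γ(s) lies within distance R of the straight line segment joining γ(0) and γ(L), one has L ≤ a·‖γ(L) − γ(0)‖ + b. -/
open Metric Set

/-- Packing lemma: a uniform bound on the number of `ε`-separated points in any
closed ball of radius `r` in `ℝ^d`. -/
lemma packing_bound (d : ℕ) (ε r : ℝ) (hε : 0 < ε) :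
    ∃ M : ℕ, ∀ (c : Fin d → ℝ) (s : Finset ℕ) (x : ℕ → Fin d → ℝ),
      (∀ i ∈ s, x i ∈ Metric.closedBall c r) →
      (∀ i ∈ s, ∀ j ∈ s, i ≠ j → ε ≤ ‖x i - x j‖) →
      s.card ≤ M := by
  obtain ⟨t, htfin, hcov⟩ := Metric.totallyBounded_iff.mp
    (isCompact_closedBall (0 : Fin d → ℝ) r).totallyBounded (ε/2) (by linarith)
  refine ⟨htfin.toFinset.card, fun c s x hball hsep => ?_⟩
  have hmem : ∀ i ∈ s, x i - c ∈ Metric.closedBall (0 : Fin d → ℝ) r := by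
    intro i hi
    have := hball i hi
    simpa [Metric.mem_closedBall, dist_eq_norm] using this
  have hch : ∀ i ∈ s, ∃ y ∈ t, x i - c ∈ Metric.ball y (ε/2) := by
    intro i hi
    have := hcov (hmem i hi)
    simpa using this
  classical
  choose! F hF1 hF2 using hch
  refine Finset.card_le_card_of_injOn F (fun i hi => htfin.mem_toFinset.mpr (hF1 i hi)) ?_
  intro i hi j hj hij
  by_contra hne
  have hsep' := hsep i hi j hj hne
  have h1 : dist (x i - c) (F i) < ε/2 := hF2 i hi
  have h2 : dist (x j - c) (F j) < ε/2 := hF2 j hj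
  rw [hij] at h1
  have : ‖x i - x j‖ < ε := by
    have : dist (x i - c) (x j - c) < ε := by
      calc dist (x i - c) (x j - c) ≤ dist (x i - c) (F j) + dist (F j) (x j - c) :=
            dist_triangle _ _ _
        _ < ε/2 + ε/2 := by rw [dist_comm (F j)]; linarith
        _ = ε := by ring
    simpa [dist_eq_norm, sub_sub_sub_cancel_right] using this
  linarith

/-- A 1-Lipschitz curve in `ℝ^d` which never returns `ε`-close to itself after
parameter time `1` and which stays within distance `R` of the straight segment
joining its endpoints has length (parameter interval) linearly bounded by the
distance between its endpoints. -/
theorem stmt_2 (d : ℕ) (hd : 1 ≤ d) (ε R : ℝ) (hε : 0 < ε) (hR : 0 < R) :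
    ∃ a b : ℝ, 0 < a ∧ 0 < b ∧
      ∀ L : ℝ, 0 ≤ L → ∀ γ : ℝ → (Fin d → ℝ),
        LipschitzOnWith 1 γ (Set.Icc 0 L) →
        (∀ s ∈ Set.Icc (0 : ℝ) L, ∀ t ∈ Set.Icc (0 : ℝ) L, 1 ≤ |s - t| → ε ≤ ‖γ s - γ t‖) →
        (∀ s ∈ Set.Icc (0 : ℝ) L, ∃ p ∈ segment ℝ (γ 0) (γ L), dist (γ s) p ≤ R) →
        L ≤ a * ‖γ L - γ 0‖ + b := by
  classical
  obtain ⟨M, hM⟩ := packing_bound d ε (2 * R + 1) hε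
  refine ⟨M + 1, M + 1, by positivity, by positivity, ?_⟩
  intro L hL γ _hlip hsep hseg
  set v : Fin d → ℝ := γ L - γ 0 with hv
  set D : ℝ := ‖v‖ with hD
  have hD0 : 0 ≤ D := norm_nonneg _
  -- natural parameters
  have hmemIcc : ∀ i : ℕ, i ≤ ⌊L⌋₊ → (i : ℝ) ∈ Set.Icc (0 : ℝ) L := by
    intro i hi
    exact ⟨Nat.cast_nonneg i, le_trans (by exact_mod_cast hi) (Nat.floor_le hL)⟩
  -- choose segment parameters
  have key : ∀ i : ℕ, i ≤ ⌊L⌋₊ →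
      ∃ u : ℝ, 0 ≤ u ∧ u ≤ 1 ∧ dist (γ i) (γ 0 + u • v) ≤ R := by
    intro i hi
    obtain ⟨p, hp, hpR⟩ := hseg i (hmemIcc i hi)
    rw [segment_eq_image'] at hp
    obtain ⟨θ, hθ, hθp⟩ := hp
    refine ⟨θ, hθ.1, hθ.2, ?_⟩
    rw [← hθp] at hpR
    simpa [hv] using hpR
  set u : ℕ → ℝ := fun i => if h : i ≤ ⌊L⌋₊ then (key i h).choose else 0 with hu
  have hu0 : ∀ i ≤ ⌊L⌋₊, 0 ≤ u i := fun i h => by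
    simp only [hu, dif_pos h]; exact (key i h).choose_spec.1
  have hu1 : ∀ i ≤ ⌊L⌋₊, u i ≤ 1 := fun i h => by
    simp only [hu, dif_pos h]; exact (key i h).choose_spec.2.1
  have huR : ∀ i ≤ ⌊L⌋₊, dist (γ i) (γ 0 + u i • v) ≤ R := fun i h => by
    simp only [hu, dif_pos h]; exact (key i h).choose_spec.2.2
  -- bucketing
  set g : ℕ → ℕ := fun i => ⌊u i * D⌋₊ with hg
  set s : Finset ℕ := Finset.range (⌊L⌋₊ + 1) with hs
  have hsmem : ∀ i ∈ s, i ≤ ⌊L⌋₊ := fun i hi => Nat.lt_succ_iff.mp (Finset.mem_range.mp hi)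
  have hmaps : ∀ i ∈ s, g i ∈ Finset.range (⌊D⌋₊ + 1) := by
    intro i hi
    refine Finset.mem_range.mpr (Nat.lt_succ_iff.mpr (Nat.floor_le_floor ?_))
    have h1 := hu1 i (hsmem i hi)
    have h0 := hu0 i (hsmem i hi)
    nlinarith
  -- separation of the points γ i
  have hxsep : ∀ i ∈ s, ∀ j ∈ s, i ≠ j → ε ≤ ‖γ i - γ j‖ := by
    intro i hi j hj hij
    refine hsep i (hmemIcc i (hsmem i hi)) j (hmemIcc j (hsmem j hj)) ?_
    have hz : ((i : ℤ) - j) ≠ 0 := by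
      intro h; exact hij (by omega)
    have := Int.one_le_abs hz
    have : (1 : ℝ) ≤ |(((i : ℤ) - j : ℤ) : ℝ)| := by exact_mod_cast (by exact_mod_cast this)
    push_cast at this
    exact this
  -- each bucket has at most M points
  have hfiber : ∀ k ∈ Finset.range (⌊D⌋₊ + 1), (s.filter fun i => g i = k).card ≤ M := by
    intro k _
    set f : Finset ℕ := s.filter fun i => g i = k with hf
    rcases f.eq_empty_or_nonempty with he | ⟨i0, hi0⟩
    · simp [he]
    · have hi0s : i0 ∈ s := (Finset.mem_filter.mp hi0).1
      refine hM (γ i0) f (fun i : ℕ => γ i) ?_ ?_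
      · intro i hi
        have his : i ∈ s := (Finset.mem_filter.mp hi).1
        have hgi : g i = k := (Finset.mem_filter.mp hi).2
        have hgi0 : g i0 = k := (Finset.mem_filter.mp hi0).2
        have hle_i := hsmem i his
        have hle_i0 := hsmem i0 hi0s
        -- both floors equal, so products differ by < 1
        have h1 : u i * D < ⌊u i * D⌋₊ + 1 :=
          Nat.lt_floor_add_one _
        have h1' : u i0 * D < ⌊u i0 * D⌋₊ + 1 :=
          Nat.lt_floor_add_one _
        have h2 : (⌊u i * D⌋₊ : ℝ) ≤ u i * D :=
          Nat.floor_le (mul_nonneg (hu0 i hle_i) hD0)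
        have h2' : (⌊u i0 * D⌋₊ : ℝ) ≤ u i0 * D :=
          Nat.floor_le (mul_nonneg (hu0 i0 hle_i0) hD0)
        have heq : (⌊u i * D⌋₊ : ℝ) = (⌊u i0 * D⌋₊ : ℝ) := by
          have : ⌊u i * D⌋₊ = ⌊u i0 * D⌋₊ := by
            simpa [hg] using hgi.trans hgi0.symm
          exact_mod_cast this
        have habs : |u i * D - u i0 * D| < 1 := by
          rw [abs_lt]; constructor <;> nlinarith
        -- distance between segment points
        have hpdist : ‖(γ 0 + u i • v) - (γ 0 + u i0 • v)‖ < 1 := by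
          have : (γ 0 + u i • v) - (γ 0 + u i0 • v) = (u i - u i0) • v := by
            module
          rw [this, norm_smul, Real.norm_eq_abs, ← hD]
          have heq2 : |u i - u i0| * D = |u i * D - u i0 * D| := by
            rw [← sub_mul, abs_mul, abs_of_nonneg hD0]
          rw [heq2]; exact habs
        have hdi := huR i hle_i
        have hdi0 := huR i0 hle_i0
        rw [Metric.mem_closedBall]
        calc dist (γ ↑i) (γ ↑i0)
            ≤ dist (γ ↑i) (γ 0 + u i • v) + dist (γ 0 + u i • v) (γ 0 + u i0 • v)
              + dist (γ 0 + u i0 • v) (γ ↑i0) := dist_triangle4 _ _ _ _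
          _ ≤ R + 1 + R := by
              have e1 : dist (γ 0 + u i • v) (γ 0 + u i0 • v) ≤ 1 := by
                rw [dist_eq_norm]; exact le_of_lt hpdist
              have e2 : dist (γ 0 + u i0 • v) (γ ↑i0) ≤ R := by
                rw [dist_comm]; exact hdi0
              linarith [hdi]
          _ = 2 * R + 1 := by ring
      · intro i hi j hj hij
        exact hxsep i (Finset.mem_filter.mp hi).1 j (Finset.mem_filter.mp hj).1 hij
  -- cardinality count
  have hcard : s.card ≤ M * (⌊D⌋₊ + 1) := by
    have := Finset.card_le_mul_card_image_of_maps_to hmaps M hfiber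
    simpa [Finset.card_range] using this
  have hn : (⌊L⌋₊ + 1 : ℕ) ≤ M * (⌊D⌋₊ + 1) := by simpa [hs, Finset.card_range] using hcard
  have hLn : L < (⌊L⌋₊ : ℝ) + 1 := Nat.lt_floor_add_one L
  have hDn : (⌊D⌋₊ : ℝ) ≤ D := Nat.floor_le hD0
  have hcast : ((⌊L⌋₊ + 1 : ℕ) : ℝ) ≤ (M : ℝ) * ((⌊D⌋₊ : ℝ) + 1) := by exact_mod_cast hn
  have hM0 : (0 : ℝ) ≤ M := Nat.cast_nonneg M
  have : L ≤ (M : ℝ) * D + (M : ℝ) := by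
    push_cast at hcast
    nlinarith
  nlinarith [norm_nonneg v]
end

section
/- Let A be an invertible linear map of ℝ^d with A-invariant linear subspaces W^{ss} and W^{ws}, and let constants 0 < μ̄ < μ < ν < 1 be given. Let F : ℝ^d → ℝ^d and H : ℝ^d → ℝ^d be bijections with H ∘ F = A ∘ H and sup_{x∈ℝ^d} ‖H(x) − x‖ ≤ C for some C ≥ 0. Assume: (i) for all x, y ∈ ℝ^d with H(y) − H(x) ∈ W^{ws} there exists M ≥ 0 such that ‖F^{−n}(x) − F^{−n}(y)‖ ≤ M·ν^{−n} for all n ≥ 0; (ii) for all x ≠ y in ℝ^d with H(y) − H(x) ∈ W^{ss} there exist c > 0 and c' ≥ 0 such that ‖F^{−n}(x) − F^{−n}(y)‖ ≥ c·μ̄^{−n} − c' for all n ≥ 0. Then every complex eigenvalue of the restriction of A to W^{ws} has absolute value strictly greater than μ, and every complex eigenvalue of the restriction of A to W^{ss} has absolute value strictly less than μ. -/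
/-!
A complex eigenvalue `λ` of `A` on an invariant subspace `W` is realised by a real-linear
map `g : ℂ → W` with `A ∘ g = g ∘ (λ * ·)`, so the backward orbits `A⁻ⁿ (g ζ) = g (λ⁻ⁿ ζ)`
grow exactly like `|λ|⁻ⁿ` (two of them are needed for a lower bound, one suffices for an
upper bound). Since `H` conjugates `F` to `A` and moves points by at most `C`, the
separation hypotheses on `F`-orbits turn into growth bounds for `A⁻ⁿ v`, up to an additive
`2C`. Growth at most `ν⁻ⁿ` on `W^{ws}` forces `|λ| ≥ ν > μ`; growth at least `μ̄⁻ⁿ` on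
`W^{ss}` forces `|λ| ≤ μ̄ < μ`.
-/

open Function Matrix

theorem le_of_forall_inv_pow_le_mul {a b K : ℝ} (ha : 0 < a)
    (h : ∀ n : ℕ, (a ^ n)⁻¹ ≤ K * (b ^ n)⁻¹) : b ≤ a := by
  by_contra! hab
  have hb : 0 < b := ha.trans hab
  obtain ⟨n, hn⟩ := pow_unbounded_of_one_lt K ((one_lt_div ha).2 hab)
  have hn' := h n
  rw [div_pow] at hn
  rw [← div_eq_mul_inv, le_div_iff₀ (pow_pos hb n), inv_mul_eq_div] at hn'
  linarith

section Complexification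

variable {V : Type*} [AddCommGroup V] [Module ℝ V] [FiniteDimensional ℝ V]

/-- If `z` is a complex eigenvector of the matrix of `f`, the witness `g ζ` is the vector with
coordinates `re (ζ * z)`. -/
theorem exists_semiconj_complex_of_isRoot_charpoly (f : V →ₗ[ℝ] V) {lam : ℂ}
    (hlam : (f.charpoly.map (algebraMap ℝ ℂ)).IsRoot lam) :
    ∃ g : ℂ →ₗ[ℝ] V, g ≠ 0 ∧ Semiconj g (lam * ·) f := by
  classical
  let b := Module.finBasis ℝ V
  set M := LinearMap.toMatrix b b f
  have hM : Module.End.HasEigenvalue (toLin' (M.map (algebraMap ℝ ℂ))) lam := by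
    rwa [Module.End.hasEigenvalue_iff_isRoot_charpoly, charpoly_toLin',
      charpoly_map, LinearMap.charpoly_toMatrix]
  obtain ⟨z, hz⟩ := hM.exists_hasEigenvector
  have hMz : M.map (algebraMap ℝ ℂ) *ᵥ z = lam • z := hz.apply_eq_smul
  let g : ℂ →ₗ[ℝ] V :=
    { toFun := fun ζ => b.equivFun.symm fun j => (ζ * z j).re
      map_add' := fun ζ ξ => by rw [← map_add]; congr 1; ext j; simp [add_mul]
      map_smul' := fun a ζ => by rw [← map_smul]; congr 1; ext j; simp [mul_assoc] }
  have hg : ∀ ζ, ⇑(b.repr (g ζ)) = fun j => (ζ * z j).re :=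
    fun ζ => b.equivFun.apply_symm_apply _
  refine ⟨g, fun hg0 => hz.2 (funext fun j => Complex.ext ?_ ?_), fun ζ => b.repr.injective ?_⟩
  · simpa [hg0] using (congrFun (hg 1) j).symm
  · simpa [hg0] using (congrFun (hg Complex.I) j).symm
  · refine DFunLike.ext' ?_
    rw [hg, ← LinearMap.toMatrix_mulVec_repr b b f, hg]
    ext j
    calc (lam * ζ * z j).re = (ζ * (lam • z) j).re := by simp [mul_left_comm, mul_assoc]
      _ = (ζ * (M.map (algebraMap ℝ ℂ) *ᵥ z) j).re := by rw [hMz]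
      _ = (M *ᵥ fun k => (ζ * z k).re) j := by
        simp [mulVec, dotProduct, Finset.mul_sum, Complex.re_sum, mul_sub, mul_left_comm]

theorem exists_semiconj_complex_of_isRoot_charpoly_restrict {E : Type*} [AddCommGroup E]
    [Module ℝ E] {W : Submodule ℝ E} [FiniteDimensional ℝ W] (f : E →ₗ[ℝ] E)
    (hW : ∀ x ∈ W, f x ∈ W) {lam : ℂ}
    (hlam : ((f.restrict hW).charpoly.map (algebraMap ℝ ℂ)).IsRoot lam) :
    ∃ g : ℂ →ₗ[ℝ] E, g ≠ 0 ∧ (∀ ζ, g ζ ∈ W) ∧ Semiconj g (lam * ·) f := by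
  obtain ⟨g, hg0, hg⟩ := exists_semiconj_complex_of_isRoot_charpoly _ hlam
  refine ⟨W.subtype ∘ₗ g, ?_, fun ζ => (g ζ).2, fun ζ => congrArg Subtype.val (hg ζ)⟩
  exact fun h => hg0 (LinearMap.ext fun ζ => Subtype.ext (LinearMap.congr_fun h ζ))

end Complexification

section Conjugacy

variable {E : Type*} [SeminormedAddCommGroup E] {C : ℝ}

theorem norm_map_sub_map_le {H : E → E} (hbd : ∀ x, ‖H x - x‖ ≤ C) (x y : E) :
    ‖H x - H y‖ ≤ ‖x - y‖ + 2 * C := by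
  have h := dist_triangle4 (H x) x y (H y)
  rw [dist_comm y (H y)] at h
  simp only [dist_eq_norm] at h
  linarith [hbd x, hbd y]

theorem norm_sub_le_norm_map_sub_map {H : E → E} (hbd : ∀ x, ‖H x - x‖ ≤ C) (x y : E) :
    ‖x - y‖ ≤ ‖H x - H y‖ + 2 * C := by
  have h := dist_triangle4 x (H x) (H y) y
  rw [dist_comm x (H x)] at h
  simp only [dist_eq_norm] at h
  linarith [hbd x, hbd y]

variable {R : Type*} [Semiring R] [Module R E] {A : E ≃ₗ[R] E} {F H : E ≃ E}

theorem Function.Semiconj.apply_iterate_symm (hconj : Semiconj H F A) (n : ℕ) (x : E) :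
    H ((⇑F.symm)^[n] x) = (⇑A.symm)^[n] (H x) :=
  (hconj.inverses_right F.apply_symm_apply A.symm_apply_apply).iterate_right n x

theorem norm_iterate_symm_eq (hconj : Semiconj H F A) (n : ℕ) (v : E) :
    ‖(⇑A.symm)^[n] v‖ =
      ‖H ((⇑F.symm)^[n] (H.symm 0)) - H ((⇑F.symm)^[n] (H.symm v))‖ := by
  rw [hconj.apply_iterate_symm, hconj.apply_iterate_symm, H.apply_symm_apply, H.apply_symm_apply,
    iterate_fixed (map_zero A.symm), zero_sub, norm_neg]

theorem exists_norm_iterate_symm_le (hconj : Semiconj H F A) (hbd : ∀ x, ‖H x - x‖ ≤ C)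
    (hC : 0 ≤ C) {ν : ℝ} (hν₀ : 0 < ν) (hν₁ : ν ≤ 1) {v : E}
    (h : ∃ M : ℝ, 0 ≤ M ∧ ∀ n : ℕ,
      ‖(⇑F.symm)^[n] (H.symm 0) - (⇑F.symm)^[n] (H.symm v)‖ ≤ M * (ν ^ n)⁻¹) :
    ∃ M : ℝ, ∀ n : ℕ, ‖(⇑A.symm)^[n] v‖ ≤ M * (ν ^ n)⁻¹ := by
  obtain ⟨M, -, hM⟩ := h
  refine ⟨M + 2 * C, fun n => ?_⟩
  have h1 : 1 ≤ (ν ^ n)⁻¹ :=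
    (one_le_inv₀ (pow_pos hν₀ n)).2 (pow_le_one₀ hν₀.le hν₁)
  rw [norm_iterate_symm_eq hconj]
  nlinarith [norm_map_sub_map_le hbd ((⇑F.symm)^[n] (H.symm 0)) ((⇑F.symm)^[n] (H.symm v)),
    hM n]

theorem exists_sub_le_norm_iterate_symm (hconj : Semiconj H F A) (hbd : ∀ x, ‖H x - x‖ ≤ C)
    (hC : 0 ≤ C) {μ : ℝ} {v : E}
    (h : ∃ c : ℝ, 0 < c ∧ ∃ c' : ℝ, 0 ≤ c' ∧ ∀ n : ℕ,
      c * (μ ^ n)⁻¹ - c' ≤ ‖(⇑F.symm)^[n] (H.symm 0) - (⇑F.symm)^[n] (H.symm v)‖) :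
    ∃ c : ℝ, 0 < c ∧ ∃ c' : ℝ, 0 ≤ c' ∧ ∀ n : ℕ,
      c * (μ ^ n)⁻¹ - c' ≤ ‖(⇑A.symm)^[n] v‖ := by
  obtain ⟨c, hc, c', hc', hcc⟩ := h
  refine ⟨c, hc, c' + 2 * C, by linarith, fun n => ?_⟩
  rw [norm_iterate_symm_eq hconj]
  linarith [hcc n,
    norm_sub_le_norm_map_sub_map hbd ((⇑F.symm)^[n] (H.symm 0)) ((⇑F.symm)^[n] (H.symm v))]

end Conjugacy

section ComplexOrbit

variable {V : Type*} [NormedAddCommGroup V] [NormedSpace ℝ V] {A : V ≃ₗ[ℝ] V}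
  {g : ℂ →ₗ[ℝ] V} {lam : ℂ}

theorem ne_zero_of_semiconj_mul (hg : g ≠ 0) (hgA : Semiconj g (lam * ·) A) : lam ≠ 0 := by
  rintro rfl
  exact hg (LinearMap.ext fun ζ => by simpa using (hgA ζ).symm)

theorem iterate_symm_apply_of_semiconj_mul (hgA : Semiconj g (lam * ·) A) (hlam : lam ≠ 0)
    (n : ℕ) (ζ : ℂ) : (⇑A.symm)^[n] (g ζ) = g (lam⁻¹ ^ n * ζ) := by
  have h : Semiconj g (lam⁻¹ * ·) A.symm :=
    hgA.inverses_right (mul_inv_cancel_left₀ hlam) A.symm_apply_apply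
  rw [← h.iterate_right n ζ, mul_left_iterate_apply]

theorem exists_pos_mul_norm_le_norm_add_norm_mul_I (hg : g ≠ 0) :
    ∃ k : ℝ, 0 < k ∧ ∀ ζ : ℂ,
      k * ‖ζ‖ ≤ ‖g ζ‖ + ‖g (ζ * Complex.I)‖ := by
  obtain ⟨ζ₀, hζ₀⟩ := DFunLike.ne_iff.1 hg
  have hζ₀' : ζ₀ ≠ 0 := by rintro rfl; simp at hζ₀
  refine ⟨‖g ζ₀‖ / ‖ζ₀‖, by positivity, fun ζ => ?_⟩
  rcases eq_or_ne ζ 0 with rfl | hζ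
  · simp
  set w := ζ₀ / ζ
  have hdecomp : ζ₀ = w.re • ζ + w.im • (ζ * Complex.I) := by
    calc ζ₀ = (w.re + w.im * Complex.I) * ζ := by
          rw [Complex.re_add_im, div_mul_cancel₀ _ hζ]
      _ = _ := by simp only [Complex.real_smul]; ring
  rw [div_mul_eq_mul_div, div_le_iff₀ (norm_pos_iff.2 hζ₀')]
  calc ‖g ζ₀‖ * ‖ζ‖
        ≤ (|w.re| * ‖g ζ‖ + |w.im| * ‖g (ζ * Complex.I)‖) * ‖ζ‖ := by
        gcongr
        rw [hdecomp, map_add, map_smul, map_smul]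
        refine (norm_add_le _ _).trans_eq ?_
        rw [norm_smul, norm_smul, Real.norm_eq_abs, Real.norm_eq_abs]
    _ ≤ ‖w‖ * (‖g ζ‖ + ‖g (ζ * Complex.I)‖) * ‖ζ‖ := by
        gcongr
        rw [mul_add]
        gcongr ?_ * _ + ?_ * _
        exacts [Complex.abs_re_le_norm w, Complex.abs_im_le_norm w]
    _ = (‖g ζ‖ + ‖g (ζ * Complex.I)‖) * ‖ζ₀‖ := by
        rw [norm_div]; field_simp

theorem le_norm_of_forall_norm_iterate_symm_le (hg : g ≠ 0) (hgA : Semiconj g (lam * ·) A)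
    {ν : ℝ} (hbound : ∀ ζ, ∃ M : ℝ, ∀ n : ℕ,
      ‖(⇑A.symm)^[n] (g ζ)‖ ≤ M * (ν ^ n)⁻¹) :
    ν ≤ ‖lam‖ := by
  have hlam := ne_zero_of_semiconj_mul hg hgA
  obtain ⟨k, hk, hlow⟩ := exists_pos_mul_norm_le_norm_add_norm_mul_I hg
  obtain ⟨M₁, hM₁⟩ := hbound 1
  obtain ⟨M₂, hM₂⟩ := hbound Complex.I
  refine le_of_forall_inv_pow_le_mul (K := (M₁ + M₂) / k) (norm_pos_iff.2 hlam) fun n => ?_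
  have h₁ := iterate_symm_apply_of_semiconj_mul hgA hlam n 1
  have h₂ := iterate_symm_apply_of_semiconj_mul hgA hlam n Complex.I
  rw [mul_one] at h₁
  rw [div_mul_eq_mul_div, le_div_iff₀ hk]
  calc (‖lam‖ ^ n)⁻¹ * k = k * ‖lam⁻¹ ^ n‖ := by
        rw [norm_pow, norm_inv, inv_pow, mul_comm]
    _ ≤ ‖g (lam⁻¹ ^ n)‖ + ‖g (lam⁻¹ ^ n * Complex.I)‖ := hlow _
    _ ≤ (M₁ + M₂) * (ν ^ n)⁻¹ := by rw [← h₁, ← h₂]; linarith [hM₁ n, hM₂ n]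

theorem norm_le_of_forall_sub_le_norm_iterate_symm (hg : g ≠ 0)
    (hgA : Semiconj g (lam * ·) A) {μ : ℝ} (hμ₀ : 0 < μ) (hμ₁ : μ < 1)
    (hbound : ∀ ζ, g ζ ≠ 0 → ∃ c : ℝ, 0 < c ∧ ∃ c' : ℝ, 0 ≤ c' ∧ ∀ n : ℕ,
      c * (μ ^ n)⁻¹ - c' ≤ ‖(⇑A.symm)^[n] (g ζ)‖) :
    ‖lam‖ ≤ μ := by
  have hlam := ne_zero_of_semiconj_mul hg hgA
  obtain ⟨ζ₀, hζ₀⟩ := DFunLike.ne_iff.1 hg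
  obtain ⟨c, hc, c', hc', hcc⟩ := hbound ζ₀ hζ₀
  set K := ‖LinearMap.toContinuousLinearMap g‖ * ‖ζ₀‖
  by_contra! hμlam
  -- Comparing with `m⁻ⁿ` absorbs both the constant `c'` and the orbit bound `K * ‖lam‖⁻ⁿ`.
  set m := min ‖lam‖ 1
  have hm : μ < m := lt_min hμlam hμ₁
  refine hm.not_ge (le_of_forall_inv_pow_le_mul (K := (c' + K) / c) hμ₀ fun n => ?_)
  have hm₀ : 0 < m := hμ₀.trans hm
  have h₁ : 1 ≤ (m ^ n)⁻¹ :=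
    (one_le_inv₀ (pow_pos hm₀ n)).2 (pow_le_one₀ hm₀.le (min_le_right _ _))
  have h₂ : (‖lam‖ ^ n)⁻¹ ≤ (m ^ n)⁻¹ :=
    inv_anti₀ (pow_pos hm₀ n) (pow_le_pow_left₀ hm₀.le (min_le_left _ _) n)
  have h₃ : ‖(⇑A.symm)^[n] (g ζ₀)‖ ≤ K * (‖lam‖ ^ n)⁻¹ := by
    rw [iterate_symm_apply_of_semiconj_mul hgA hlam, ← LinearMap.coe_toContinuousLinearMap' g]
    refine ((LinearMap.toContinuousLinearMap g).le_opNorm _).trans_eq ?_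
    rw [norm_mul, norm_pow, norm_inv, inv_pow]
    ring
  rw [div_mul_eq_mul_div, le_div_iff₀ hc]
  have hK : 0 ≤ K := by positivity
  nlinarith [hcc n, mul_le_mul_of_nonneg_left h₁ hc', mul_le_mul_of_nonneg_left h₂ hK]

end ComplexOrbit

/-- Backward separation rates of a conjugated system pin down the moduli of the
eigenvalues of the linear model along the weak stable and strong stable
invariant subspaces. -/
theorem stmt_6 (d : ℕ) (A : (Fin d → ℝ) ≃ₗ[ℝ] (Fin d → ℝ))
    (Wss Wws : Submodule ℝ (Fin d → ℝ))
    (hWss : ∀ x ∈ Wss, A.toLinearMap x ∈ Wss)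
    (hWws : ∀ x ∈ Wws, A.toLinearMap x ∈ Wws)
    (μbar μ ν : ℝ) (h1 : 0 < μbar) (h2 : μbar < μ) (h3 : μ < ν) (h4 : ν < 1)
    (F H : (Fin d → ℝ) ≃ (Fin d → ℝ)) (C : ℝ) (hC : 0 ≤ C)
    (hconj : ∀ x, H (F x) = A (H x))
    (hbd : ∀ x, ‖H x - x‖ ≤ C)
    (hws : ∀ x y : Fin d → ℝ, H y - H x ∈ Wws →
      ∃ M : ℝ, 0 ≤ M ∧ ∀ n : ℕ,
        ‖(⇑F.symm)^[n] x - (⇑F.symm)^[n] y‖ ≤ M * (ν ^ n)⁻¹)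
    (hss : ∀ x y : Fin d → ℝ, x ≠ y → H y - H x ∈ Wss →
      ∃ c : ℝ, 0 < c ∧ ∃ c' : ℝ, 0 ≤ c' ∧ ∀ n : ℕ,
        c * (μbar ^ n)⁻¹ - c' ≤ ‖(⇑F.symm)^[n] x - (⇑F.symm)^[n] y‖) :
    (∀ lam : ℂ,
        ((A.toLinearMap.restrict hWws).charpoly.map (algebraMap ℝ ℂ)).IsRoot lam →
        μ < ‖lam‖) ∧
    (∀ lam : ℂ,
        ((A.toLinearMap.restrict hWss).charpoly.map (algebraMap ℝ ℂ)).IsRoot lam →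
        ‖lam‖ < μ) := by
  refine ⟨fun lam hlam => ?_, fun lam hlam => ?_⟩
  · obtain ⟨g, hg, hgW, hgA⟩ := exists_semiconj_complex_of_isRoot_charpoly_restrict _ hWws hlam
    refine h3.trans_le (le_norm_of_forall_norm_iterate_symm_le (A := A) hg hgA fun ζ => ?_)
    exact exists_norm_iterate_symm_le hconj hbd hC (h1.trans (h2.trans h3)) h4.le
      (hws _ _ (by simpa using hgW ζ))
  · obtain ⟨g, hg, hgW, hgA⟩ := exists_semiconj_complex_of_isRoot_charpoly_restrict _ hWss hlam
    refine (norm_le_of_forall_sub_le_norm_iterate_symm (A := A) hg hgA h1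
      (h2.trans (h3.trans h4)) fun ζ hζ => ?_).trans_lt h2
    exact exists_sub_le_norm_iterate_symm hconj hbd hC
      (hss _ _ (H.symm.injective.ne hζ.symm) (by simpa using hgW ζ))
end
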